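/- arXiv:2211.02245 — 4 statements merged into one kernel-verified Lean document; each statement's English description precedes it below -/
import Mathlib

section
/- Suppose w1 and w2 are equal in spaCy but w1 ≠ w2 as strings. Then every position j at which w1(j) ≠ w2(j) satisfies 4 < j and j ≤ |w1| − 3 (1-indexed), i.e., all differing positions lie strictly after the 4th character and strictly before the last 3 characters. -/
/-- A character: uppercase letter, lowercase letter, digit, or special symbol. -/
inductive Ch
  | up (n : ℕ)
  | lo (n : ℕ)
  | dig (n : Fin 10)
  | sp (n : ℕ)
  deriving DecidableEq

/-- Case folding: maps uppercase letters to lowercase ones, identity otherwise. -/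
def Ch.lower : Ch → Ch
  | .up n => .lo n
  | c => c

/-- Shape characters. -/
inductive Sh
  | X | x | d | spec (n : ℕ)
  deriving DecidableEq

/-- Character class of a character. -/
def Ch.shapeChar : Ch → Sh
  | .up _ => .X
  | .lo _ => .x
  | .dig _ => .d
  | .sp n => .spec n

/-- A word is a finite string of characters. -/
abbrev Word := List Ch

/-- The norm of a word: its lowercase form. -/
def Word.norm (w : Word) : Word := w.map Ch.lower

/-- The prefix of a word: its first character. -/
def Word.pre (w : Word) : Word := w.take 1

/-- The suffix of a word: its last 3 characters. -/
def Word.suf (w : Word) : Word := w.drop (w.length - 3)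

/-- Truncate maximal runs of identical shape characters to length at most 4;
`prev` is the current run's character and `k` its number of occurrences so far. -/
def truncAux : Sh → ℕ → List Sh → List Sh
  | _, _, [] => []
  | prev, k, a :: rest =>
    if a = prev then
      (if k < 4 then [a] else []) ++ truncAux a (k + 1) rest
    else
      a :: truncAux a 1 rest

/-- The shape of a word: its character-class string with every maximal run of
identical shape characters truncated to length at most 4. -/
def Word.shape (w : Word) : List Sh :=
  match w.map Ch.shapeChar with
  | [] => []
  | a :: rest => a :: truncAux a 1 rest

/-- Two words are equal in spaCy iff they have the same prefix, suffix, norm and shape. -/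
def spacyEq (w1 w2 : Word) : Prop :=
  w1.pre = w2.pre ∧ w1.suf = w2.suf ∧ w1.norm = w2.norm ∧ w1.shape = w2.shape

lemma truncAux_ne (p : List Sh) : ∀ (prev : Sh) (k : ℕ) (a b : Sh) (t1 t2 : List Sh),
    a ≠ b → 1 ≤ k → k + p.length ≤ 3 →
    truncAux prev k (p ++ a :: t1) ≠ truncAux prev k (p ++ b :: t2) := by
  induction p with
  | nil =>
    intro prev k a b t1 t2 hab hk1 hk4
    simp only [List.length_nil] at hk4
    have hk : k < 4 := by omega
    simp only [List.nil_append, truncAux]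
    by_cases ha : a = prev <;> by_cases hb : b = prev
    · exact absurd (ha.trans hb.symm) hab
    · subst ha
      rw [if_pos rfl, if_neg hb, if_pos hk]
      intro hcons
      exact hab (by simpa using congrArg List.head? hcons)
    · subst hb
      rw [if_pos rfl, if_neg ha, if_pos hk]
      intro hcons
      exact hab (by simpa using congrArg List.head? hcons)
    · rw [if_neg ha, if_neg hb]
      intro hcons
      exact hab (by simpa using congrArg List.head? hcons)
  | cons c p ih =>
    intro prev k a b t1 t2 hab hk1 hk4
    simp only [List.length_cons] at hk4
    simp only [List.cons_append, truncAux]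
    by_cases hc : c = prev
    · subst hc
      simp only [if_pos rfl]
      intro hcontra
      exact ih c (k+1) a b t1 t2 hab (by omega) (by omega)
        (by simpa using List.append_cancel_left hcontra)
    · simp only [if_neg hc]
      intro hcontra
      exact ih c 1 a b t1 t2 hab le_rfl (by omega) (by injection hcontra)

lemma shape_ne {w1 w2 : Word} {p t1 t2 : List Sh} {a b : Sh} (hab : a ≠ b)
    (hp : p.length ≤ 3)
    (h1 : w1.map Ch.shapeChar = p ++ a :: t1) (h2 : w2.map Ch.shapeChar = p ++ b :: t2) :
    w1.shape ≠ w2.shape := by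
  show (match w1.map Ch.shapeChar with
    | [] => ([] : List Sh)
    | a :: rest => a :: truncAux a 1 rest) ≠
    (match w2.map Ch.shapeChar with
    | [] => ([] : List Sh)
    | a :: rest => a :: truncAux a 1 rest)
  rw [h1, h2]
  cases p with
  | nil =>
    simp only [List.nil_append]
    intro hcontra
    exact hab (List.cons.inj hcontra).1
  | cons c p' =>
    simp only [List.cons_append]
    intro hcontra
    exact truncAux_ne p' c 1 a b t1 t2 hab le_rfl
      (by simp only [List.length_cons] at hp; omega) (List.cons.inj hcontra).2

lemma shapeChar_ne {c1 c2 : Ch} (hl : c1.lower = c2.lower) (hne : c1 ≠ c2) :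
    c1.shapeChar ≠ c2.shapeChar := by
  cases c1 <;> cases c2 <;> simp_all [Ch.lower, Ch.shapeChar]

theorem spacyEq_ne_diff_position (w1 w2 : Word) (h : spacyEq w1 w2) (hne : w1 ≠ w2)
    (j : ℕ) (h1 : j < w1.length) (h2 : j < w2.length)
    (hdiff : w1[j]'h1 ≠ w2[j]'h2) :
    4 < j + 1 ∧ j + 1 ≤ w1.length - 3 := by
  obtain ⟨hpre, hsuf, hnorm, hshape⟩ := h
  have hlen : w1.length = w2.length := by
    simpa [Word.norm] using congrArg List.length hnorm
  have hlow : ∀ i (hi : i < w1.length),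
      (w1[i]'hi).lower = (w2[i]'(hlen ▸ hi)).lower := by
    intro i hi
    have e := List.getElem_of_eq hnorm (l := w1.norm) (i := i)
      (by simpa [Word.norm] using hi)
    simpa [Word.norm] using e
  constructor
  · -- lower bound: 4 < j + 1
    by_contra hc
    push_neg at hc
    have hj3 : j ≤ 3 := by omega
    have hQj : w1[j]? ≠ w2[j]? := by
      rw [List.getElem?_eq_getElem h1, List.getElem?_eq_getElem h2]
      simpa using hdiff
    have hex : ∃ i, w1[i]? ≠ w2[i]? := ⟨j, hQj⟩
    have hj0 : w1[Nat.find hex]? ≠ w2[Nat.find hex]? := Nat.find_spec hex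
    have hj0le : Nat.find hex ≤ j := Nat.find_min' hex hQj
    set j0 := Nat.find hex with hj0def
    have hmin : ∀ i < j0, w1[i]? = w2[i]? := fun i hi =>
      not_not.mp (Nat.find_min hex hi)
    have hj0lt : j0 < w1.length := lt_of_le_of_lt hj0le h1
    have hj0lt2 : j0 < w2.length := hlen ▸ hj0lt
    have hcne : w1[j0]'hj0lt ≠ w2[j0]'hj0lt2 := by
      intro he
      apply hj0
      rw [List.getElem?_eq_getElem hj0lt, List.getElem?_eq_getElem hj0lt2, he]
    have hj0ne0 : j0 ≠ 0 := by
      intro h0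
      apply hj0
      rw [h0]
      have e1 : w1[0]? = (w1.take 1)[0]? := by
        rw [List.getElem?_take]; simp
      have e2 : w2[0]? = (w2.take 1)[0]? := by
        rw [List.getElem?_take]; simp
      rw [e1, e2]
      unfold Word.pre at hpre
      rw [hpre]
    have htake : w1.take j0 = w2.take j0 := by
      apply List.ext_getElem?
      intro i
      by_cases hi : i < j0
      · rw [List.getElem?_take, List.getElem?_take, if_pos hi, if_pos hi]
        exact hmin i hi
      · rw [List.getElem?_eq_none, List.getElem?_eq_none] <;>
          simp only [List.length_take] <;> omega
    have hdec1 : w1 = w1.take j0 ++ w1[j0]'hj0lt :: w1.drop (j0 + 1) := by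
      conv_lhs => rw [← List.take_append_drop j0 w1]
      rw [List.getElem_cons_drop]
    have hdec2 : w2 = w2.take j0 ++ w2[j0]'hj0lt2 :: w2.drop (j0 + 1) := by
      conv_lhs => rw [← List.take_append_drop j0 w2]
      rw [List.getElem_cons_drop]
    apply shape_ne (w1 := w1) (w2 := w2)
      (p := (w1.take j0).map Ch.shapeChar)
      (t1 := (w1.drop (j0 + 1)).map Ch.shapeChar)
      (t2 := (w2.drop (j0 + 1)).map Ch.shapeChar)
      (shapeChar_ne (hlow j0 hj0lt) hcne)
      (by simp only [List.length_map, List.length_take]; omega)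
      (by conv_lhs => rw [hdec1]
          rw [List.map_append, List.map_cons])
      (by conv_lhs => rw [hdec2]
          rw [List.map_append, List.map_cons, ← htake])
    exact hshape
  · -- upper bound
    by_contra hc
    push_neg at hc
    have hj3 : w1.length - 3 ≤ j := by omega
    apply hdiff
    unfold Word.suf at hsuf
    have e1 : w1[j]'h1 = (w1.drop (w1.length - 3))[j - (w1.length - 3)]'
        (by simp only [List.length_drop]; omega) := by
      rw [List.getElem_drop]
      congr 1
      omega
    have e2 : w2[j]'h2 = (w2.drop (w2.length - 3))[j - (w1.length - 3)]'
        (by simp only [List.length_drop]; omega) := by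
      rw [List.getElem_drop]
      congr 1
      omega
    rw [e1, e2]
    exact List.getElem_of_eq hsuf _
end

section
/- If w1 and w2 are equal in spaCy and w1 ≠ w2 as strings, then the middle of each word (the substring obtained by removing the 1-character prefix and the 3-character suffix) has length at least 5; equivalently, |w1| = |w2| ≥ 9. -/
/-- The middle of a word: the word with its 1-character prefix and 3-character
suffix removed. -/
def Word.mid (w : Word) : Word := (w.drop 1).take (w.length - 4)

lemma truncAux_len_le : ∀ (s : List Sh) (p : Sh) (k : ℕ),
    (truncAux p k s).length ≤ s.length := by
  intro s
  induction s with
  | nil => intro p k; simp [truncAux]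
  | cons a r ih =>
    intro p k
    simp only [truncAux]
    split_ifs with h1 h2 <;> simp only [List.cons_append, List.nil_append,
      List.length_cons, List.singleton_append]
    · exact Nat.succ_le_succ (ih a (k+1))
    · exact le_trans (ih a (k+1)) (Nat.le_succ _)
    · exact Nat.succ_le_succ (ih a 1)

lemma truncAux_len_ge : ∀ (s : List Sh) (p : Sh) (k : ℕ),
    min (4 - min k 4) s.length ≤ (truncAux p k s).length := by
  intro s
  induction s with
  | nil => intro p k; simp [truncAux]
  | cons a r ih =>
    intro p k
    simp only [truncAux]
    split_ifs with h1 h2 <;> simp only [List.cons_append, List.nil_append,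
      List.length_cons, List.singleton_append]
    · have := ih a (k+1); omega
    · have := ih a (k+1); omega
    · have := ih a 1; omega

lemma truncAux_inj : ∀ (s1 s2 : List Sh) (p : Sh) (k : ℕ), 1 ≤ k →
    s1.length = s2.length → s1.length + min k 5 ≤ 8 →
    truncAux p k s1 = truncAux p k s2 → s1 = s2 := by
  intro s1
  induction s1 with
  | nil =>
    intro s2 p k _ hlen _ _
    cases s2 with
    | nil => rfl
    | cons b r2 => simp at hlen
  | cons a r1 ih =>
    intro s2 p k hk hlen hbound heq
    cases s2 with
    | nil => simp at hlen
    | cons b r2 =>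
      simp only [List.length_cons] at hlen hbound
      by_cases hab : a = b
      · subst hab
        simp only [truncAux] at heq
        by_cases hap : a = p
        · simp only [if_pos hap] at heq
          have heq2 : truncAux a (k+1) r1 = truncAux a (k+1) r2 :=
            List.append_cancel_left heq
          have : r1 = r2 := ih r2 a (k+1) (by omega) (by omega) (by omega) heq2
          rw [this]
        · simp only [if_neg hap, List.cons.injEq] at heq
          have : r1 = r2 := ih r2 a 1 le_rfl (by omega) (by omega) heq.2
          rw [this]
      · exfalso
        simp only [truncAux] at heq
        by_cases hap : a = p
        · have hbp : ¬ b = p := fun hbp => hab (hap.trans hbp.symm)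
          simp only [if_pos hap, if_neg hbp] at heq
          by_cases hk4 : k < 4
          · simp only [if_pos hk4, List.singleton_append, List.cons.injEq] at heq
            exact hab heq.1
          · simp only [if_neg hk4, List.nil_append] at heq
            have h1 : (truncAux a (k+1) r1).length ≤ r1.length := truncAux_len_le r1 a (k+1)
            have h2 : min (4 - min 1 4) r2.length ≤ (truncAux b 1 r2).length :=
              truncAux_len_ge r2 b 1
            have h3 : (truncAux a (k+1) r1).length = (b :: truncAux b 1 r2).length := by
              rw [heq]
            simp only [List.length_cons] at h3
            omega
        · by_cases hbp : b = p
          · simp only [if_pos hbp, if_neg hap] at heq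
            by_cases hk4 : k < 4
            · simp only [if_pos hk4, List.singleton_append, List.cons.injEq] at heq
              exact hab heq.1
            · simp only [if_neg hk4, List.nil_append] at heq
              have h1 : (truncAux b (k+1) r2).length ≤ r2.length := truncAux_len_le r2 b (k+1)
              have h2 : min (4 - min 1 4) r1.length ≤ (truncAux a 1 r1).length :=
                truncAux_len_ge r1 a 1
              have h3 : (a :: truncAux a 1 r1).length = (truncAux b (k+1) r2).length := by
                rw [heq]
              simp only [List.length_cons] at h3
              omega
          · simp only [if_neg hap, if_neg hbp, List.cons.injEq] at heq
            exact hab heq.1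

lemma ch_eq (c1 c2 : Ch) (h1 : c1.lower = c2.lower)
    (h2 : c1.shapeChar = c2.shapeChar) : c1 = c2 := by
  cases c1 <;> cases c2 <;> simp_all [Ch.lower, Ch.shapeChar]

lemma shape_map_eq (w1 w2 : Word) (hlen : w1.length = w2.length) (h8 : w1.length ≤ 8)
    (hs : w1.shape = w2.shape) : w1.map Ch.shapeChar = w2.map Ch.shapeChar := by
  cases w1 with
  | nil =>
    cases w2 with
    | nil => rfl
    | cons c t => simp at hlen
  | cons c1 t1 =>
    cases w2 with
    | nil => simp at hlen
    | cons c2 t2 =>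
      simp only [Word.shape, List.map_cons, List.cons.injEq] at hs
      simp only [List.length_cons] at hlen h8
      obtain ⟨hc, ht⟩ := hs
      have : t1.map Ch.shapeChar = t2.map Ch.shapeChar := by
        apply truncAux_inj _ _ (Ch.shapeChar c1) 1 le_rfl
        · simp only [List.length_map]; omega
        · simp only [List.length_map]; omega
        · rw [hc] at ht ⊢; exact ht
      simp [hc, this]

lemma norm_shape_eq (w1 w2 : Word) (hn : w1.norm = w2.norm)
    (hsh : w1.map Ch.shapeChar = w2.map Ch.shapeChar) : w1 = w2 := by
  have hlen : w1.length = w2.length := by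
    have := congrArg List.length hn
    simpa [Word.norm] using this
  apply List.ext_getElem hlen
  intro i h1 h2
  apply ch_eq
  · have := congrArg (fun l => l[i]?) hn
    simp only [Word.norm, List.getElem?_map] at this
    have h1' : i < w1.length := h1
    have h2' : i < w2.length := h2
    rw [List.getElem?_eq_getElem h1', List.getElem?_eq_getElem h2'] at this
    simpa using this
  · have := congrArg (fun l => l[i]?) hsh
    simp only [List.getElem?_map] at this
    have h1' : i < w1.length := h1
    have h2' : i < w2.length := h2
    rw [List.getElem?_eq_getElem h1', List.getElem?_eq_getElem h2'] at this
    simpa using this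

theorem spacyEq_ne_mid_length (w1 w2 : Word) (h : spacyEq w1 w2) (hne : w1 ≠ w2) :
    w1.length = w2.length ∧ 5 ≤ w1.mid.length ∧ 5 ≤ w2.mid.length ∧ 9 ≤ w1.length := by
  obtain ⟨_, _, hn, hsh⟩ := h
  have hlen : w1.length = w2.length := by
    have := congrArg List.length hn
    simpa [Word.norm] using this
  have h9 : 9 ≤ w1.length := by
    by_contra hlt
    push_neg at hlt
    exact hne (norm_shape_eq w1 w2 hn (shape_map_eq w1 w2 hlen (by omega) hsh))
  refine ⟨hlen, ?_, ?_, h9⟩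
  · simp only [Word.mid, List.length_take, List.length_drop]
    omega
  · simp only [Word.mid, List.length_take, List.length_drop]
    omega
end

section
/- Call two words spaCy-equal if they have the same prefix, suffix, norm, and shape in spaCy. Then there exist words u ≠ v with spaCy-equal(u, v) and |u| = 9, and no such pair exists with |u| ≤ 8; that is, 9 is the minimum length at which spaCy-equality and string equality can differ. -/
/-- Relation between shape chars that can come from case-folding-equal chars. -/
def R (a b : Sh) : Prop := a = b ∨ (a = Sh.X ∧ b = Sh.x) ∨ (a = Sh.x ∧ b = Sh.X)

lemma trunc_len (l : List Sh) : ∀ p k, (truncAux p k l).length ≤ l.length := by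
  induction l with
  | nil => intro p k; simp [truncAux]
  | cons a l ih =>
    intro p k
    simp only [truncAux]
    by_cases h : a = p
    · rw [if_pos h]
      by_cases h4 : k < 4
      · rw [if_pos h4]; simpa using Nat.succ_le_succ (ih a (k+1))
      · rw [if_neg h4]; simp only [List.nil_append, List.length_cons]
        exact le_trans (ih a (k+1)) (Nat.le_succ _)
    · rw [if_neg h]; simpa using Nat.succ_le_succ (ih a 1)

lemma trunc_id (l : List Sh) : ∀ p k, k + l.length ≤ 4 → truncAux p k l = l := by
  induction l with
  | nil => intro p k _; simp [truncAux]
  | cons a l ih =>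
    intro p k hk
    simp only [List.length_cons] at hk
    simp only [truncAux]
    by_cases h : a = p
    · rw [if_pos h, if_pos (by omega)]
      simp [ih a (k+1) (by omega)]
    · rw [if_neg h]
      simp [ih a 1 (by omega)]

lemma noway {a b : Sh} (hab : a ≠ b) {s t : List Sh} (hl : s.length = t.length)
    (p : Sh) (k : ℕ) (hk : 1 ≤ k) (hlen : k + s.length + 1 ≤ 8) :
    truncAux p k (a :: s) ≠ truncAux p k (b :: t) := by
  intro heq
  simp only [truncAux] at heq
  by_cases hap : a = p <;> by_cases hbp : b = p
  · exact hab (hap.trans hbp.symm)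
  · rw [if_pos hap, if_neg hbp] at heq
    by_cases h4 : k < 4
    · rw [if_pos h4] at heq
      simp only [List.cons_append, List.nil_append, List.cons.injEq] at heq
      exact hab heq.1
    · rw [if_neg h4] at heq
      simp only [List.nil_append] at heq
      have h1 : (truncAux a (k+1) s).length ≤ s.length := trunc_len s a (k+1)
      have h2 : truncAux b 1 t = t := trunc_id t b 1 (by omega)
      rw [h2] at heq
      have h3 := congrArg List.length heq
      simp only [List.length_cons] at h3
      omega
  · rw [if_neg hap, if_pos hbp] at heq
    by_cases h4 : k < 4
    · rw [if_pos h4] at heq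
      simp only [List.cons_append, List.nil_append, List.cons.injEq] at heq
      exact hab heq.1
    · rw [if_neg h4] at heq
      simp only [List.nil_append] at heq
      have h1 : (truncAux b (k+1) t).length ≤ t.length := trunc_len t b (k+1)
      have h2 : truncAux a 1 s = s := trunc_id s a 1 (by omega)
      rw [h2] at heq
      have h3 := congrArg List.length heq
      simp only [List.length_cons] at h3
      omega
  · rw [if_neg hap, if_neg hbp] at heq
    injection heq with h1 _
    exact hab h1

lemma keyT : ∀ {s t : List Sh}, List.Forall₂ R s t → ∀ (p : Sh) (k : ℕ),
    1 ≤ k → k + s.length ≤ 8 → truncAux p k s = truncAux p k t → s = t := by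
  intro s t h
  induction h with
  | nil => intro _ _ _ _ _; rfl
  | @cons a b s t hab htail ih =>
    intro p k hk hlen heq
    simp only [List.length_cons] at hlen
    have hl : s.length = t.length := htail.length_eq
    have hab' : a = b := by
      by_contra hne
      exact noway hne hl p k hk (by omega) heq
    subst hab'
    by_cases hap : a = p
    · subst hap
      simp only [truncAux, if_pos rfl] at heq
      have h2 := List.append_cancel_left heq
      rw [ih a (k+1) (by omega) (by omega) h2]
    · simp only [truncAux, if_neg hap] at heq
      injection heq with _ h2
      rw [ih a 1 le_rfl (by omega) h2]

lemma lower_R {c d : Ch} (h : c.lower = d.lower) : R c.shapeChar d.shapeChar := by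
  cases c <;> cases d <;> simp_all [Ch.lower, Ch.shapeChar, R]

lemma char_eq {c d : Ch} (h : c.lower = d.lower) (h2 : c.shapeChar = d.shapeChar) :
    c = d := by
  cases c <;> cases d <;> simp_all [Ch.lower, Ch.shapeChar]

lemma forall2_R : ∀ {u v : Word}, u.map Ch.lower = v.map Ch.lower →
    List.Forall₂ R (u.map Ch.shapeChar) (v.map Ch.shapeChar) := by
  intro u
  induction u with
  | nil =>
    intro v h
    rw [List.map_nil] at h
    rw [(List.map_eq_nil_iff.mp h.symm)]
    exact .nil
  | cons c u ih =>
    intro v h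
    cases v with
    | nil => simp at h
    | cons d v =>
      simp only [List.map_cons, List.cons.injEq] at h ⊢
      exact .cons (lower_R h.1) (ih h.2)

lemma words_eq : ∀ {u v : Word}, u.map Ch.lower = v.map Ch.lower →
    u.map Ch.shapeChar = v.map Ch.shapeChar → u = v := by
  intro u
  induction u with
  | nil =>
    intro v h _
    rw [List.map_nil] at h
    exact (List.map_eq_nil_iff.mp h.symm).symm
  | cons c u ih =>
    intro v h h2
    cases v with
    | nil => simp at h
    | cons d v =>
      simp only [List.map_cons, List.cons.injEq] at h h2 ⊢
      exact ⟨char_eq h.1 h2.1, ih h.2 h2.2⟩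

def shapeS : List Sh → List Sh
  | [] => []
  | a :: rest => a :: truncAux a 1 rest

lemma shape_shapeS (w : Word) : w.shape = shapeS (w.map Ch.shapeChar) := by
  cases h : w.map Ch.shapeChar <;> simp [Word.shape, shapeS, h]

lemma shape_eq_of (s t : List Sh) (hF : List.Forall₂ R s t) (hlen : s.length ≤ 8)
    (hsh : shapeS s = shapeS t) :
    s = t := by
  cases hF with
  | nil => rfl
  | @cons a b s t hab htail =>
    simp only [List.length_cons] at hlen
    simp only [shapeS] at hsh
    injection hsh with h1 h2
    subst h1
    rw [keyT htail a 1 le_rfl (by omega) h2]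

theorem spacyEq_min_length_nine :
    (∃ u v : Word, u ≠ v ∧ spacyEq u v ∧ u.length = 9) ∧
    (∀ u v : Word, spacyEq u v → u.length ≤ 8 → u = v) := by
  constructor
  · refine ⟨[.up 0, .up 1, .up 2, .up 3, .up 4, .lo 5, .lo 6, .lo 7, .lo 8],
           [.up 0, .up 1, .up 2, .up 3, .lo 4, .lo 5, .lo 6, .lo 7, .lo 8],
           by decide, ⟨rfl, rfl, rfl, rfl⟩, rfl⟩
  · intro u v hsp hlen
    obtain ⟨-, -, hnorm, hshape⟩ := hsp
    have hnorm' : u.map Ch.lower = v.map Ch.lower := hnorm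
    have hF := forall2_R hnorm'
    have hlen' : (u.map Ch.shapeChar).length ≤ 8 := by simpa using hlen
    rw [shape_shapeS, shape_shapeS] at hshape
    have hs : u.map Ch.shapeChar = v.map Ch.shapeChar :=
      shape_eq_of _ _ hF hlen' hshape
    exact words_eq hnorm' hs
end

section
/- Suppose w1 and w2 are words with the same norm, and suppose that at some position j ≤ 4 (1-indexed) we have w1(j) ≠ w2(j). If additionally both words agree at all positions before j, then shape(w1) ≠ shape(w2) (so w1 and w2 are not equal in spaCy). -/
lemma truncAux_take (m : ℕ) : ∀ (prev : Sh) (k : ℕ) (l : List Sh), k + m ≤ 4 →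
    (truncAux prev k l).take m = l.take m := by
  induction m with
  | zero => simp
  | succ m ih =>
    intro prev k l hk
    cases l with
    | nil => simp [truncAux]
    | cons a rest =>
      unfold truncAux
      by_cases h : a = prev
      · simp [h, show k < 4 by omega, List.take_succ_cons, ih prev (k+1) rest (by omega)]
      · simp [h, List.take_succ_cons, ih a 1 rest (by omega)]

lemma shape_take (w : Word) (m : ℕ) (hm : m ≤ 4) :
    w.shape.take m = (w.map Ch.shapeChar).take m := by
  cases w with
  | nil => simp [Word.shape]
  | cons c rest =>
    cases m with
    | zero => simp
    | succ m =>
      simp [Word.shape, List.take_succ_cons, truncAux_take m _ 1 _ (by omega)]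

theorem norm_eq_early_diff_shape_ne (w1 w2 : Word) (hnorm : w1.norm = w2.norm)
    (j : ℕ) (hj : j + 1 ≤ 4) (h1 : j < w1.length) (h2 : j < w2.length)
    (hdiff : w1[j]'h1 ≠ w2[j]'h2)
    (hprev : ∀ (k : ℕ) (hk : k < j), w1[k]'(by omega) = w2[k]'(by omega)) :
    w1.shape ≠ w2.shape := by
  have hlow : Ch.lower (w1[j]'h1) = Ch.lower (w2[j]'h2) := by
    have h := congrArg (fun l : Word => l[j]?) hnorm
    simp [Word.norm, List.getElem?_eq_getElem, h1, h2] at h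
    exact h
  have hsh : (w1[j]'h1).shapeChar ≠ (w2[j]'h2).shapeChar := by
    cases e1 : w1[j]'h1 <;> cases e2 : w2[j]'h2 <;>
      simp_all [Ch.lower, Ch.shapeChar]
  intro h
  have ht := congrArg (fun l => List.take (j+1) l) h
  simp only [shape_take w1 (j+1) hj, shape_take w2 (j+1) hj] at ht
  have := congrArg (fun l : List Sh => l[j]?) ht
  simp [List.getElem?_take, List.getElem?_eq_getElem, h1, h2] at this
  exact hsh this
end
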